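/- Let λ ∈ ℝ and let a : ℕ → ℝ be any sequence (the coefficients of an invertible power series A(t)). For k ∈ ℕ define ℓ_{k,λ}(x) := (1/k!)·Σ_{j=0}^{k} (−x)^j·(1)_{j,λ}·L(k,j) (the coefficient of t^k in e_λ(−xt/(1−t))), and define y_{n,λ}(x) := Σ_{k=0}^{n} a_{n−k}·ℓ_{k,λ}(x) (the coefficient of t^n in A(t)·e_λ(−xt/(1−t))). Then for every n ≥ 1 and every x ∈ ℝ: y′_{n,λ}(x) = −Σ_{k=1}^{n} Σ_{l=1}^{k} x^{l−1}·λ^{l−1}·C(k−1, k−l)·y_{n−k,λ}(x), where ′ denotes the derivative with respect to x. -/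

import Mathlib

/-- The degenerate falling factorial `(1)_{m,λ} = ∏_{j=0}^{m-1} (1 - jλ)`. -/
noncomputable def degFall (lam : ℝ) (m : ℕ) : ℝ :=
  ∏ j ∈ Finset.range m, (1 - (j : ℝ) * lam)

/-- The Lah numbers: `L(n,k) = C(n−1,k−1)·n!/k!` for `1 ≤ k ≤ n`, with
`L(0,0) = 1` and `L(n,0) = 0` for `n ≥ 1`. -/
noncomputable def lah (n k : ℕ) : ℝ :=
  if k = 0 then (if n = 0 then 1 else 0)
  else (Nat.choose (n - 1) (k - 1) : ℝ) * (Nat.factorial n : ℝ) / (Nat.factorial k : ℝ)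

/-- `ℓ_{k,λ}(x)`: the coefficient of `t^k` in `e_λ(−xt/(1−t))`. -/
noncomputable def ellCoeff (lam : ℝ) (k : ℕ) (x : ℝ) : ℝ :=
  (1 / (Nat.factorial k : ℝ)) * ∑ j ∈ Finset.range (k + 1), (-x) ^ j * degFall lam j * lah k j

/-- `y_{n,λ}(x)`: the coefficient of `tⁿ` in `A(t)·e_λ(−xt/(1−t))`, where `A(t) = ∑ aₙ tⁿ`. -/
noncomputable def yCoeff (lam : ℝ) (a : ℕ → ℝ) (n : ℕ) (x : ℝ) : ℝ :=
  ∑ k ∈ Finset.range (n + 1), a (n - k) * ellCoeff lam k x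


/-!
Write `e_j(x) = (-x)^j (1)_{j,λ} / j!` for the coefficient of `u^j` in `e_λ(-xu)`. Since
`L(k+1,i+1)/(k+1)! = C(k,i)/(i+1)!`, we have `ℓ_{k+1} = ∑_i C(k,i) e_{i+1}`, and
`e_{i+1}' = -(1 - iλ) e_i`. Pascal's rule and `(i+1) e_{i+1} = -x (1 - iλ) e_i` give
`∑_i C(k,i) (1 - iλ) e_i = ∑_{j ≤ k} (1+λx)^{k-j} ℓ_j`,
so `ℓ_k' = -∑_{j<k} (1+λx)^{k-1-j} ℓ_j`; this is the coefficientwise form of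
`∂ₓF = -t F / (1 - (1+λx) t)` for `F = e_λ(-xt/(1-t))`.
Convolving with `a` yields `y_n' = -∑_{k=1}^n (1+λx)^{k-1} y_{n-k}`, and the inner sum over `l`
in the theorem is the binomial expansion of `(1+λx)^{k-1}`.
-/

open Finset

lemma lah_succ_zero (k : ℕ) : lah (k + 1) 0 = 0 := by
  simp [lah]

lemma lah_succ_succ_div_factorial (k i : ℕ) :
    lah (k + 1) (i + 1) / (k + 1).factorial = k.choose i / (i + 1).factorial := by
  simp only [lah, Nat.add_eq_zero_iff, one_ne_zero, and_false, if_false, Nat.add_sub_cancel]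
  field_simp

lemma degFall_succ (lam : ℝ) (j : ℕ) :
    degFall lam (j + 1) = degFall lam j * (1 - j * lam) :=
  prod_range_succ _ _

noncomputable def degExpCoeff (lam : ℝ) (j : ℕ) (x : ℝ) : ℝ :=
  (-x) ^ j * degFall lam j / j.factorial

lemma ellCoeff_zero (lam : ℝ) : ellCoeff lam 0 = fun _ => 1 := by
  funext x
  simp [ellCoeff, degFall, lah]

lemma ellCoeff_succ (lam : ℝ) (k : ℕ) (x : ℝ) :
    ellCoeff lam (k + 1) x = ∑ i ∈ range (k + 1), k.choose i * degExpCoeff lam (i + 1) x := by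
  rw [ellCoeff, sum_range_succ', lah_succ_zero, mul_zero, add_zero, mul_sum]
  refine sum_congr rfl fun i _ => ?_
  rw [degExpCoeff]
  linear_combination (-x) ^ (i + 1) * degFall lam (i + 1) * lah_succ_succ_div_factorial k i

lemma hasDerivAt_degExpCoeff_succ (lam : ℝ) (i : ℕ) (x : ℝ) :
    HasDerivAt (degExpCoeff lam (i + 1)) (-(1 - i * lam) * degExpCoeff lam i x) x := by
  have h := (((hasDerivAt_id x).neg.pow (i + 1)).mul_const (degFall lam (i + 1))).div_const
    ((i + 1).factorial : ℝ)
  refine h.congr_deriv ?_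
  rw [degExpCoeff, degFall_succ, Nat.factorial_succ]
  simp only [Pi.neg_apply, id_eq, Nat.add_sub_cancel]
  push_cast
  field_simp

lemma succ_mul_degExpCoeff_succ (lam : ℝ) (i : ℕ) (x : ℝ) :
    (i + 1) * degExpCoeff lam (i + 1) x = -x * (1 - i * lam) * degExpCoeff lam i x := by
  rw [degExpCoeff, degExpCoeff, degFall_succ, Nat.factorial_succ]
  push_cast
  field_simp
  ring

lemma sum_choose_mul_degExpCoeff (lam : ℝ) (k : ℕ) (x : ℝ) :
    ∑ i ∈ range (k + 1), k.choose i * ((1 - i * lam) * degExpCoeff lam i x) =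
      ∑ j ∈ range (k + 1), (1 + lam * x) ^ (k - j) * ellCoeff lam j x := by
  induction k with
  | zero => simp [degExpCoeff, degFall, ellCoeff_zero]
  | succ k ih =>
    have hshift :
        ∑ i ∈ range (k + 1), k.choose i * ((1 - ↑(i + 1) * lam) * degExpCoeff lam (i + 1) x)
        = ∑ i ∈ range (k + 1), k.choose i * degExpCoeff lam (i + 1) x
          + lam * x *
            ∑ i ∈ range (k + 1), k.choose i * ((1 - i * lam) * degExpCoeff lam i x) := by
      rw [mul_sum, ← sum_add_distrib]
      refine sum_congr rfl fun i _ => ?_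
      push_cast
      linear_combination (-lam * k.choose i) * succ_mul_degExpCoeff_succ lam i x
    have hpow : ∑ j ∈ range (k + 1), (1 + lam * x) ^ (k + 1 - j) * ellCoeff lam j x
        = (1 + lam * x) * ∑ j ∈ range (k + 1), (1 + lam * x) ^ (k - j) * ellCoeff lam j x := by
      rw [mul_sum]
      refine sum_congr rfl fun j hj => ?_
      rw [Nat.sub_add_comm (mem_range_succ_iff.1 hj), pow_succ]
      ring
    rw [Finset.sum_choose_succ_mul (fun i _ => (1 - i * lam) * degExpCoeff lam i x), hshift,
      sum_range_succ _ (k + 1), Nat.sub_self, pow_zero, one_mul, ← ellCoeff_succ, hpow, ← ih]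
    ring

lemma hasDerivAt_ellCoeff (lam : ℝ) (k : ℕ) (x : ℝ) :
    HasDerivAt (ellCoeff lam k)
      (-∑ j ∈ range k, (1 + lam * x) ^ (k - 1 - j) * ellCoeff lam j x) x := by
  cases k with
  | zero => simpa [ellCoeff_zero] using hasDerivAt_const x (1 : ℝ)
  | succ k =>
    have h := HasDerivAt.fun_sum fun i (_ : i ∈ range (k + 1)) =>
      (hasDerivAt_degExpCoeff_succ lam i x).const_mul (k.choose i : ℝ)
    rw [Nat.add_sub_cancel, ← sum_choose_mul_degExpCoeff, ← sum_neg_distrib,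
      funext (ellCoeff_succ lam k)]
    exact h.congr_deriv (sum_congr rfl fun i _ => by ring)

lemma sum_range_succ_sum_range_eq_sum_Icc_sum_range {M : Type*} [AddCommMonoid M] (n : ℕ)
    (F : ℕ → ℕ → M) :
    ∑ k ∈ range (n + 1), ∑ j ∈ range k, F k j =
      ∑ m ∈ Icc 1 n, ∑ j ∈ range (n - m + 1), F (m + j) j := by
  rw [sum_sigma', sum_sigma']
  refine sum_nbij' (fun p => ⟨p.1 - p.2, p.2⟩) (fun p => ⟨p.1 + p.2, p.2⟩) ?_ ?_ ?_ ?_ ?_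
  all_goals
    rintro ⟨k, j⟩ h
    simp only [mem_sigma, mem_range, mem_Icc] at h ⊢
  · omega
  · omega
  · simp only [Sigma.mk.injEq, heq_eq_eq, and_true]; omega
  · simp only [Sigma.mk.injEq, heq_eq_eq, and_true]; omega
  · rw [Nat.sub_add_cancel h.2.le]

lemma hasDerivAt_yCoeff (lam : ℝ) (a : ℕ → ℝ) (n : ℕ) (x : ℝ) :
    HasDerivAt (yCoeff lam a n)
      (-∑ m ∈ Icc 1 n, (1 + lam * x) ^ (m - 1) * yCoeff lam a (n - m) x) x := by
  have h := HasDerivAt.fun_sum fun k (_ : k ∈ range (n + 1)) =>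
    (hasDerivAt_ellCoeff lam k x).const_mul (a (n - k))
  refine h.congr_deriv ?_
  simp_rw [mul_neg, sum_neg_distrib, mul_sum, yCoeff, mul_sum]
  rw [sum_range_succ_sum_range_eq_sum_Icc_sum_range]
  refine congrArg _ (sum_congr rfl fun m _ => sum_congr rfl fun j _ => ?_)
  rw [Nat.sub_sub, Nat.sub_sub, show m + j - (1 + j) = m - 1 by omega]
  ring

lemma sum_Icc_pow_mul_choose {R : Type*} [CommSemiring R] (r : R) (k : ℕ) (hk : 1 ≤ k) :
    ∑ l ∈ Icc 1 k, r ^ (l - 1) * ((k - 1).choose (k - l) : R) = (1 + r) ^ (k - 1) := by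
  obtain ⟨m, rfl⟩ := Nat.exists_eq_add_of_le' hk
  rw [← Ico_add_one_right_eq_Icc, ← zero_add 1, ← sum_Ico_add', ← range_eq_Ico, zero_add,
    Nat.add_sub_cancel, add_comm 1 r, add_pow]
  refine sum_congr rfl fun i hi => ?_
  rw [Nat.add_sub_cancel, Nat.add_sub_add_right, Nat.choose_symm (mem_range_succ_iff.1 hi),
    one_pow, mul_one]

theorem yCoeff_deriv_sum_general (lam : ℝ) (a : ℕ → ℝ) (n : ℕ) (x : ℝ) :
    deriv (yCoeff lam a n) x =
      -∑ k ∈ Finset.Icc 1 n, ∑ l ∈ Finset.Icc 1 k,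
        x ^ (l - 1) * lam ^ (l - 1) * (Nat.choose (k - 1) (k - l) : ℝ) *
          yCoeff lam a (n - k) x := by
  rw [(hasDerivAt_yCoeff lam a n x).deriv]
  refine congrArg _ (sum_congr rfl fun k hk => ?_)
  simp_rw [← sum_mul, ← mul_pow, sum_Icc_pow_mul_choose _ k (mem_Icc.1 hk).1, mul_comm x lam]

/-- Theorem 6, second identity:
`y′_{n,λ}(x) = −∑_{k=1}^n ∑_{l=1}^k x^{l−1} λ^{l−1} C(k−1,k−l) y_{n−k,λ}(x)` for `n ≥ 1`. -/
theorem yCoeff_deriv_sum (lam : ℝ) (a : ℕ → ℝ) (n : ℕ) (hn : 1 ≤ n) (x : ℝ) :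
    deriv (yCoeff lam a n) x =
      -∑ k ∈ Finset.Icc 1 n, ∑ l ∈ Finset.Icc 1 k,
        x ^ (l - 1) * lam ^ (l - 1) * (Nat.choose (k - 1) (k - l) : ℝ) *
          yCoeff lam a (n - k) x :=
  yCoeff_deriv_sum_general lam a n x
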